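/- arXiv:1907.06256 — 8 statements merged into one kernel-verified Lean document; each statement's English description precedes it below -/
import Mathlib

section
/- Under the hypotheses of the previous statement (system-level constraints with G invertible), if additionally R and Y := C*N + 1 are invertible, then L − Mm*R⁻¹*N = L*(1 + C*N)⁻¹ = U*Y⁻¹ with U := L. (That is, the SLP controller L − M R⁻¹ N equals the IOP controller U Y⁻¹.) -/
/-- Theorem 2, part 1 (controller equality): under the system-level affine constraints,
with `R` and `1 + C*N` invertible, the SLP controller equals the IOP controller:
`L − Mm*R⁻¹*N = L*(1 + C*N)⁻¹`. -/
theorem slp_controller_eq_iop_controller {M : Type*} [Ring M] (G B C R Mm N L : M)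
    [Invertible G] [Invertible R] [Invertible (1 + C * N)]
    (h1 : ⅟G * R - B * Mm = 1) (h2 : R * ⅟G - N * C = 1)
    (h3 : ⅟G * N - B * L = 0) (h4 : Mm * ⅟G - L * C = 0) :
    L - Mm * ⅟R * N = L * ⅟(1 + C * N) := by
  have hu1 : (1 + C * N) * ⅟(1 + C * N) = 1 := mul_invOf_self _
  have hu2 : ⅟(1 + C * N) * (1 + C * N) = 1 := invOf_mul_self _
  have h2' : R * ⅟G = 1 + N * C := by
    have := sub_eq_iff_eq_add.mp h2; rw [this, add_comm]
  have h4' : Mm * ⅟G = L * C := sub_eq_zero.mp h4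
  have hR : R = (1 + N * C) * G := by
    calc R = R * ⅟G * G := by rw [mul_assoc, invOf_mul_self, mul_one]
    _ = (1 + N * C) * G := by rw [h2']
  have hMm : Mm = L * C * G := by
    calc Mm = Mm * ⅟G * G := by rw [mul_assoc, invOf_mul_self, mul_one]
    _ = L * C * G := by rw [h4']
  have hw1 : (1 + N * C) * (1 - N * ⅟(1 + C * N) * C) = 1 := by
    calc (1 + N * C) * (1 - N * ⅟(1 + C * N) * C)
        = 1 + N * C - N * ((1 + C * N) * ⅟(1 + C * N)) * C := by noncomm_ring
    _ = 1 := by rw [hu1]; noncomm_ring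
  have hRw : R * (⅟G * (1 - N * ⅟(1 + C * N) * C)) = 1 := by
    rw [hR, mul_assoc, ← mul_assoc G, mul_invOf_self, one_mul, hw1]
  have hRinv : ⅟R = ⅟G * (1 - N * ⅟(1 + C * N) * C) := invOf_eq_right_inv hRw
  have hwN : (1 - N * ⅟(1 + C * N) * C) * N = N * ⅟(1 + C * N) := by
    calc (1 - N * ⅟(1 + C * N) * C) * N
        = N * (⅟(1 + C * N) * (1 + C * N)) - N * ⅟(1 + C * N) * (C * N) := by
          rw [hu2]; noncomm_ring
    _ = N * ⅟(1 + C * N) := by noncomm_ring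
  have hMR : Mm * ⅟R * N = L * (C * N) * ⅟(1 + C * N) := by
    rw [hMm, hRinv]
    calc L * C * G * (⅟G * (1 - N * ⅟(1 + C * N) * C)) * N
        = L * C * (G * ⅟G) * ((1 - N * ⅟(1 + C * N) * C) * N) := by noncomm_ring
    _ = L * (C * N) * ⅟(1 + C * N) := by
        rw [mul_invOf_self, hwN]; noncomm_ring
  rw [hMR]
  calc L - L * (C * N) * ⅟(1 + C * N)
      = L * ((1 + C * N) * ⅟(1 + C * N)) - L * (C * N) * ⅟(1 + C * N) := by
        rw [hu1]; noncomm_ring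
  _ = L * ⅟(1 + C * N) := by noncomm_ring
end

section
/- Let M be a ring, G a unit, B, C ∈ M, P := C*G*B. Let U ∈ M and define R := G + G*B*U*C*G, Mm := U*C*G, N := G*B*U, L := U. Then (R, Mm, N, L) satisfy the system-level affine constraints: G⁻¹*R − B*Mm = 1, R*G⁻¹ − N*C = 1, G⁻¹*N − B*L = 0, and Mm*G⁻¹ − L*C = 0. -/
/-- Theorem 2, part 2 (IOP → SLP): given an input-output parameter `U`, the transfer
matrices `R := G + G*B*U*C*G`, `Mm := U*C*G`, `N := G*B*U`, `L := U` satisfy the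
system-level affine constraints. -/
theorem iop_to_slp {M : Type*} [Ring M] (G B C U : M) [Invertible G]
    (P : M) (hP : P = C * G * B)
    (R Mm N L : M)
    (hR : R = G + G * B * U * C * G) (hMm : Mm = U * C * G)
    (hN : N = G * B * U) (hL : L = U) :
    ⅟G * R - B * Mm = 1 ∧ R * ⅟G - N * C = 1 ∧
      ⅟G * N - B * L = 0 ∧ Mm * ⅟G - L * C = 0 := by
  subst hR hMm hN hL
  refine ⟨?_, ?_, ?_, ?_⟩ <;>
    simp [mul_add, add_mul, mul_sub, sub_mul, mul_assoc, ← mul_assoc (⅟G) G,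
      invOf_mul_self, mul_invOf_self, sub_eq_iff_eq_add]
end

section
/- Let M be a ring with a doubly-coprime factorization of P: P = Nr*Mr⁻¹ = Ml⁻¹*Nl with Mr, Ml units, and Ul*Mr − Vl*Nr = 1, Ul*Vr − Vl*Ur = 0, Ml*Nr = Nl*Mr, −Nl*Vr + Ml*Ur = 1, together with the right-inverse relations Mr*Ul − Vr*Nl = 1, Vr*Ml = Mr*Vl, Nr*Ul = Ur*Nl, Ur*Ml − Nr*Vl = 1. For Q ∈ M define Y := (Ur − Nr*Q)*Ml, U := (Vr − Mr*Q)*Ml, W := (Ur − Nr*Q)*Nl, Z := 1 + (Vr − Mr*Q)*Nl. Then Y − P*U = 1, W − P*Z = 0, Y*P − W = 0, and Z − U*P = 1. -/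
/-- Theorem 1, part 1 (Youla → IOP): given a doubly-coprime factorization of `P`, for any
`Q` the transfer matrices `Y := (Ur − Nr*Q)*Ml`, `U := (Vr − Mr*Q)*Ml`,
`W := (Ur − Nr*Q)*Nl`, `Z := 1 + (Vr − Mr*Q)*Nl` satisfy the input-output affine
constraints. -/
theorem youla_to_iop {M : Type*} [Ring M] (P Ul Vl Nl Ml Ur Vr Nr Mr : M)
    [Invertible Ml] [Invertible Mr]
    (hP1 : P = Nr * ⅟Mr) (hP2 : P = ⅟Ml * Nl)
    (hl1 : Ul * Mr - Vl * Nr = 1) (hl2 : Ul * Vr - Vl * Ur = 0)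
    (hl3 : Ml * Nr = Nl * Mr) (hl4 : -(Nl * Vr) + Ml * Ur = 1)
    (hr1 : Mr * Ul - Vr * Nl = 1) (hr2 : Vr * Ml = Mr * Vl)
    (hr3 : Nr * Ul = Ur * Nl) (hr4 : Ur * Ml - Nr * Vl = 1)
    (Q Y U W Z : M)
    (hY : Y = (Ur - Nr * Q) * Ml) (hU : U = (Vr - Mr * Q) * Ml)
    (hW : W = (Ur - Nr * Q) * Nl) (hZ : Z = 1 + (Vr - Mr * Q) * Nl) :
    Y - P * U = 1 ∧ W - P * Z = 0 ∧ Y * P - W = 0 ∧ Z - U * P = 1 := by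
  have hVN : Vr * Nl = Mr * Ul - 1 := by rw [← hr1]; noncomm_ring
  subst hY hU hW hZ
  refine ⟨?_, ?_, ?_, ?_⟩
  · rw [hP1]
    calc (Ur - Nr * Q) * Ml - Nr * ⅟Mr * ((Vr - Mr * Q) * Ml)
        = Ur * Ml - Nr * (Q * Ml)
          - (Nr * (⅟Mr * (Vr * Ml)) - Nr * (⅟Mr * (Mr * (Q * Ml)))) := by noncomm_ring
      _ = Ur * Ml - Nr * (Q * Ml)
          - (Nr * (⅟Mr * (Mr * Vl)) - Nr * (Q * Ml)) := by
            simp only [hr2, invOf_mul_cancel_left]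
      _ = Ur * Ml - Nr * Vl := by simp only [invOf_mul_cancel_left]; noncomm_ring
      _ = 1 := hr4
  · rw [hP1]
    calc (Ur - Nr * Q) * Nl - Nr * ⅟Mr * (1 + (Vr - Mr * Q) * Nl)
        = Ur * Nl - Nr * (Q * Nl) - Nr * ⅟Mr - Nr * (⅟Mr * (Vr * Nl))
          + Nr * (⅟Mr * (Mr * (Q * Nl))) := by noncomm_ring
      _ = Ur * Nl - Nr * (Q * Nl) - Nr * ⅟Mr - Nr * (⅟Mr * (Mr * Ul) - ⅟Mr * 1)
          + Nr * (Q * Nl) := by rw [hVN, mul_sub]; simp only [invOf_mul_cancel_left]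
      _ = Ur * Nl - Nr * (⅟Mr * (Mr * Ul)) := by noncomm_ring
      _ = Ur * Nl - Nr * Ul := by simp only [invOf_mul_cancel_left]
      _ = 0 := by rw [hr3, sub_self]
  · rw [hP2, mul_assoc, mul_invOf_cancel_left, sub_self]
  · rw [hP2, mul_assoc, mul_invOf_cancel_left]; noncomm_ring
end

section
/- Let M be a ring with a doubly-coprime factorization of P as above (both block identities hold, Ml, Mr units, P = Nr Mr⁻¹ = Ml⁻¹ Nl). Suppose Y, U, W, Z ∈ M satisfy Y − P*U = 1, W − P*Z = 0, Y*P − W = 0, Z − U*P = 1. Define Q := Vl*Y*Ur − Ul*U*Ur − Vl*W*Vr + Ul*Z*Vr − Vl*Ur. Then (Ur − Nr*Q)*Ml = Y and (Vr − Mr*Q)*Ml = U; in particular, if Y is invertible, (Vr − Mr*Q)*(Ur − Nr*Q)⁻¹ = U*Y⁻¹. -/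
/-- Theorem 1, part 2 (IOP → Youla): given a two-sided doubly-coprime factorization of `P`
and input-output parameters `(Y, U, W, Z)` in the affine subspace, the Youla parameter
`Q := Vl*Y*Ur − Ul*U*Ur − Vl*W*Vr + Ul*Z*Vr − Vl*Ur` satisfies `(Ur − Nr*Q)*Ml = Y`
and `(Vr − Mr*Q)*Ml = U`; hence if `Y` is invertible then
`(Vr − Mr*Q)*(Ur − Nr*Q)⁻¹ = U*Y⁻¹`. -/
theorem iop_to_youla {M : Type*} [Ring M] (P Ul Vl Nl Ml Ur Vr Nr Mr : M)
    [Invertible Ml] [Invertible Mr]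
    (hNl : Ml * P = Nl) (hNr : P * Mr = Nr)
    (hl1 : Ul * Mr - Vl * Nr = 1) (hl2 : Ul * Vr - Vl * Ur = 0)
    (hl3 : -(Nl * Mr) + Ml * Nr = 0) (hl4 : -(Nl * Vr) + Ml * Ur = 1)
    (hr1 : Mr * Ul - Vr * Nl = 1) (hr2 : -(Mr * Vl) + Vr * Ml = 0)
    (hr3 : Nr * Ul - Ur * Nl = 0) (hr4 : -(Nr * Vl) + Ur * Ml = 1)
    (Y U W Z : M)
    (h1 : Y - P * U = 1) (h2 : W - P * Z = 0) (h3 : Y * P - W = 0) (h4 : Z - U * P = 1)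
    (Q : M) (hQ : Q = Vl * Y * Ur - Ul * U * Ur - Vl * W * Vr + Ul * Z * Vr - Vl * Ur) :
    (Ur - Nr * Q) * Ml = Y ∧ (Vr - Mr * Q) * Ml = U ∧
      (IsUnit Y → (Vr - Mr * Q) * Ring.inverse (Ur - Nr * Q) = U * Ring.inverse Y) := by
  -- basic rearrangements of the coprimeness identities
  have e1 : Nr * Vl = Ur * Ml - 1 := by
    rw [eq_sub_iff_add_eq, ← hr4]; abel
  have e2 : Nr * Ul = Ur * Nl := sub_eq_zero.mp hr3
  have e3 : Vr * Ml = Mr * Vl := by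
    rw [← sub_eq_zero, ← hr2]; noncomm_ring
  have e4 : Mr * Ul = 1 + Vr * Nl := by
    rw [← hr1]; noncomm_ring
  have e5 : Ur * Ml = 1 + Nr * Vl := by
    rw [← hr4]; abel
  -- consequences of the affine constraints
  have key1 : Ml * Y - Nl * U = Ml := by
    rw [← hNl, show Ml * Y - Ml * P * U = Ml * (Y - P * U) by noncomm_ring, h1, mul_one]
  have key2 : Ml * W - Nl * Z = 0 := by
    rw [← hNl, show Ml * W - Ml * P * Z = Ml * (W - P * Z) by noncomm_ring, h2, mul_zero]
  have key3 : Y * Nr - W * Mr = 0 := by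
    rw [← hNr, show Y * (P * Mr) - W * Mr = (Y * P - W) * Mr by noncomm_ring, h3, zero_mul]
  have key4 : Mr + (U * Nr - Z * Mr) = 0 := by
    rw [← hNr, show Mr + (U * (P * Mr) - Z * Mr) = -((Z - U * P) - 1) * Mr by noncomm_ring,
      h4]
    noncomm_ring
  have hNrQ : Nr * Q = Ur - Y * Ur + W * Vr := by
    rw [hQ]
    calc Nr * (Vl * Y * Ur - Ul * U * Ur - Vl * W * Vr + Ul * Z * Vr - Vl * Ur)
        = (Nr * Vl) * Y * Ur - (Nr * Ul) * U * Ur - (Nr * Vl) * W * Vr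
            + (Nr * Ul) * Z * Vr - (Nr * Vl) * Ur := by noncomm_ring
      _ = (Ur * Ml - 1) * Y * Ur - (Ur * Nl) * U * Ur - (Ur * Ml - 1) * W * Vr
            + (Ur * Nl) * Z * Vr - (Ur * Ml - 1) * Ur := by rw [e1, e2]
      _ = Ur * (Ml * Y - Nl * U) * Ur - Y * Ur - Ur * (Ml * W - Nl * Z) * Vr
            + W * Vr - Ur * Ml * Ur + Ur := by noncomm_ring
      _ = Ur * Ml * Ur - Y * Ur - Ur * 0 * Vr + W * Vr - Ur * Ml * Ur + Ur := by
            rw [key1, key2]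
      _ = Ur - Y * Ur + W * Vr := by noncomm_ring
  have hMrQ : Mr * Q = Vr - U * Ur + Z * Vr - Vr := by
    rw [hQ]
    calc Mr * (Vl * Y * Ur - Ul * U * Ur - Vl * W * Vr + Ul * Z * Vr - Vl * Ur)
        = (Mr * Vl) * Y * Ur - (Mr * Ul) * U * Ur - (Mr * Vl) * W * Vr
            + (Mr * Ul) * Z * Vr - (Mr * Vl) * Ur := by noncomm_ring
      _ = (Vr * Ml) * Y * Ur - (1 + Vr * Nl) * U * Ur - (Vr * Ml) * W * Vr
            + (1 + Vr * Nl) * Z * Vr - (Vr * Ml) * Ur := by rw [← e3, e4]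
      _ = Vr * (Ml * Y - Nl * U) * Ur - U * Ur - Vr * (Ml * W - Nl * Z) * Vr
            + Z * Vr - Vr * Ml * Ur := by noncomm_ring
      _ = Vr * Ml * Ur - U * Ur - Vr * 0 * Vr + Z * Vr - Vr * Ml * Ur := by
            rw [key1, key2]
      _ = Vr - U * Ur + Z * Vr - Vr := by noncomm_ring
  have hA : (Ur - Nr * Q) * Ml = Y := by
    calc (Ur - Nr * Q) * Ml
        = (Y * Ur - W * Vr) * Ml := by rw [hNrQ]; noncomm_ring
      _ = Y * (Ur * Ml) - W * (Vr * Ml) := by noncomm_ring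
      _ = Y * (1 + Nr * Vl) - W * (Mr * Vl) := by rw [e5, e3]
      _ = Y + (Y * Nr - W * Mr) * Vl := by noncomm_ring
      _ = Y := by rw [key3]; noncomm_ring
  have hB : (Vr - Mr * Q) * Ml = U := by
    calc (Vr - Mr * Q) * Ml
        = (Vr + U * Ur - Z * Vr) * Ml := by rw [hMrQ]; noncomm_ring
      _ = Vr * Ml + U * (Ur * Ml) - Z * (Vr * Ml) := by noncomm_ring
      _ = Mr * Vl + U * (1 + Nr * Vl) - Z * (Mr * Vl) := by rw [e3, e5]
      _ = U + (Mr + (U * Nr - Z * Mr)) * Vl := by noncomm_ring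
      _ = U := by rw [key4]; noncomm_ring
  refine ⟨hA, hB, fun hY => ?_⟩
  have hA' : Ur - Nr * Q = Y * ⅟Ml := by
    rw [← hA, mul_assoc, mul_invOf_self, mul_one]
  have hB' : Vr - Mr * Q = U * ⅟Ml := by
    rw [← hB, mul_assoc, mul_invOf_self, mul_one]
  have hAu : IsUnit (Ur - Nr * Q) := by
    rw [hA']; exact hY.mul (isUnit_of_invertible _)
  apply hAu.mul_right_cancel
  rw [mul_assoc, Ring.inverse_mul_cancel _ hAu, mul_one, hA', hB', mul_assoc,
    ← mul_assoc (Ring.inverse Y), Ring.inverse_mul_cancel _ hY, one_mul]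
end

section
/- Let M be a ring, G a unit (standing for (zI−A)⁻¹), B, C ∈ M, and let (Ul, Vl, Nl, Ml, Ur, Vr, Nr, Mr) be a doubly-coprime factorization of P := C*G*B (both block identities, Ml and Mr units, Ml*P = Nl, P*Mr = Nr). For Q ∈ M define R := G + G*B*(Vr − Mr*Q)*Ml*C*G, Mm := (Vr − Mr*Q)*Ml*C*G, N := G*B*(Vr − Mr*Q)*Ml, L := (Vr − Mr*Q)*Ml. Then (R, Mm, N, L) satisfy the system-level affine constraints G⁻¹*R − B*Mm = 1, R*G⁻¹ − N*C = 1, G⁻¹*N − B*L = 0, and Mm*G⁻¹ − L*C = 0. -/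
/-- Theorem 3, part 1 (Youla → SLP): with `G = (zI−A)⁻¹` a unit, `P := C*G*B`, and a
doubly-coprime factorization of `P`, for any `Q` the transfer matrices
`R := G + G*B*(Vr − Mr*Q)*Ml*C*G`, `Mm := (Vr − Mr*Q)*Ml*C*G`,
`N := G*B*(Vr − Mr*Q)*Ml`, `L := (Vr − Mr*Q)*Ml` satisfy the system-level affine
constraints. -/
theorem youla_to_slp {M : Type*} [Ring M] (G B C : M) [Invertible G]
    (P Ul Vl Nl Ml Ur Vr Nr Mr : M) [Invertible Ml] [Invertible Mr]
    (hP : P = C * G * B) (hNl : Ml * P = Nl) (hNr : P * Mr = Nr)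
    (hl1 : Ul * Mr - Vl * Nr = 1) (hl2 : Ul * Vr - Vl * Ur = 0)
    (hl3 : -(Nl * Mr) + Ml * Nr = 0) (hl4 : -(Nl * Vr) + Ml * Ur = 1)
    (hr1 : Mr * Ul - Vr * Nl = 1) (hr2 : -(Mr * Vl) + Vr * Ml = 0)
    (hr3 : Nr * Ul - Ur * Nl = 0) (hr4 : -(Nr * Vl) + Ur * Ml = 1)
    (Q R Mm N L : M)
    (hR : R = G + G * B * ((Vr - Mr * Q) * Ml) * C * G)
    (hMm : Mm = (Vr - Mr * Q) * Ml * C * G)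
    (hN : N = G * B * ((Vr - Mr * Q) * Ml))
    (hL : L = (Vr - Mr * Q) * Ml) :
    ⅟G * R - B * Mm = 1 ∧ R * ⅟G - N * C = 1 ∧
      ⅟G * N - B * L = 0 ∧ Mm * ⅟G - L * C = 0 := by
  subst hR hMm hN hL
  refine ⟨?_, ?_, ?_, ?_⟩ <;>
    simp [mul_add, add_mul, sub_mul, mul_sub, mul_assoc, invOf_mul_cancel_left,
      mul_invOf_cancel_left, invOf_mul_cancel_right]
end

section
/- Let M be a ring, G a unit (standing for (zI−A)⁻¹), B ∈ M. Suppose R, Mm ∈ M satisfy G⁻¹*R − B*Mm = 1 (the state-feedback SLP constraint (zI−A)R − B₂M = I with C₂ = I). Define L := Mm*G⁻¹ and N := R*G⁻¹ − 1. Then (R, Mm, N, L) satisfy all four system-level constraints with C = 1: G⁻¹*R − B*Mm = 1, R*G⁻¹ − N = 1, G⁻¹*N − B*L = 0, Mm*G⁻¹ − L = 0; moreover if R is invertible then L − Mm*R⁻¹*N = Mm*R⁻¹. -/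
/-- State-feedback SLP reduction (`C₂ = I`): if `G⁻¹*R − B*Mm = 1`, then with
`L := Mm*G⁻¹` and `N := R*G⁻¹ − 1` all four system-level constraints hold with `C = 1`,
and if `R` is invertible then `L − Mm*R⁻¹*N = Mm*R⁻¹`. -/
theorem state_feedback_slp {M : Type*} [Ring M] (G B R Mm : M) [Invertible G]
    (h : ⅟G * R - B * Mm = 1)
    (L N : M) (hL : L = Mm * ⅟G) (hN : N = R * ⅟G - 1) :
    ⅟G * R - B * Mm = 1 ∧ R * ⅟G - N = 1 ∧ ⅟G * N - B * L = 0 ∧ Mm * ⅟G - L = 0 ∧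
      (IsUnit R → L - Mm * Ring.inverse R * N = Mm * Ring.inverse R) := by
  refine ⟨h, by rw [hN]; noncomm_ring, ?_, by rw [hL]; noncomm_ring, ?_⟩
  · have : (⅟G * R - B * Mm) * ⅟G = 1 * ⅟G := by rw [h]
    rw [hN, hL]
    calc ⅟G * (R * ⅟G - 1) - B * (Mm * ⅟G)
        = (⅟G * R - B * Mm) * ⅟G - ⅟G := by noncomm_ring
      _ = 0 := by rw [h]; noncomm_ring
  · intro hR
    have hinv : Ring.inverse R * R = 1 := Ring.inverse_mul_cancel R hR
    rw [hL, hN]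
    calc Mm * ⅟G - Mm * Ring.inverse R * (R * ⅟G - 1)
        = Mm * ⅟G - Mm * (Ring.inverse R * R) * ⅟G + Mm * Ring.inverse R := by noncomm_ring
      _ = Mm * Ring.inverse R := by rw [hinv]; noncomm_ring
end

section
/- Let M be a ring, P, W, Z ∈ M with W − P*Z = 0 (the state-feedback IOP constraint) where P = G*B with G a unit and B a unit (B₂ invertible, C₂ = I). Define U := (Z − 1)*B⁻¹*G⁻¹ and Y := W*B⁻¹*G⁻¹. Then Z − U*P = 1, W − Y*P = 0, and Y − P*U = 1; moreover if W and Y are invertible, then U*Y⁻¹ = (Z − 1)*W⁻¹. -/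
/-- Corollary 3 (state-feedback IOP with invertible `B₂`): with `G`, `B` units,
`P := G*B`, and `W − P*Z = 0`, setting `U := (Z − 1)*B⁻¹*G⁻¹` and `Y := W*B⁻¹*G⁻¹`
gives `Z − U*P = 1`, `W − Y*P = 0`, `Y − P*U = 1`, and if `W`, `Y` are units then
`U*Y⁻¹ = (Z − 1)*W⁻¹`. -/
theorem state_feedback_iop {M : Type*} [Ring M] (G B : M) [Invertible G] [Invertible B]
    (P : M) (hP : P = G * B) (W Z : M) (hWZ : W - P * Z = 0)
    (U Y : M) (hU : U = (Z - 1) * ⅟B * ⅟G) (hY : Y = W * ⅟B * ⅟G) :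
    Z - U * P = 1 ∧ W - Y * P = 0 ∧ Y - P * U = 1 ∧
      (IsUnit W → IsUnit Y →
        U * Ring.inverse Y = (Z - 1) * Ring.inverse W) := by
  have hW : W = G * B * Z := by
    have h := sub_eq_zero.mp hWZ; rw [h, hP]
  have hcanc : ∀ x : M, x * ⅟B * ⅟G * (G * B) = x := by
    intro x
    calc x * ⅟B * ⅟G * (G * B) = x * ⅟B * (⅟G * G) * B := by
          simp only [mul_assoc]
      _ = x := by simp [mul_assoc]
  have h1 : Z - U * P = 1 := by
    rw [hU, hP, hcanc]; exact sub_sub_cancel Z 1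
  have h2 : W - Y * P = 0 := by
    rw [hY, hP, hcanc, sub_self]
  have h3 : Y - P * U = 1 := by
    rw [hY, hU, hW, hP]
    have : G * B * Z * ⅟B * ⅟G - G * B * ((Z - 1) * ⅟B * ⅟G)
        = G * B * ((Z - (Z - 1)) * ⅟B * ⅟G) := by noncomm_ring
    rw [this, sub_sub_cancel]
    simp [mul_assoc]
  refine ⟨h1, h2, h3, fun hWu hYu => ?_⟩
  have key : (U * Ring.inverse Y) * Y = ((Z - 1) * Ring.inverse W) * Y := by
    rw [mul_assoc, Ring.inverse_mul_cancel _ hYu, mul_one, hY, hU]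
    exact (calc (Z - 1) * Ring.inverse W * (W * ⅟B * ⅟G)
        = (Z - 1) * (Ring.inverse W * W) * ⅟B * ⅟G := by simp only [mul_assoc]
      _ = (Z - 1) * ⅟B * ⅟G := by rw [Ring.inverse_mul_cancel _ hWu, mul_one]).symm
  exact hYu.mul_right_cancel key
end

section
/- Let M be a ring and P, K ∈ M with 1 − P*K invertible. Then 1 − K*P is invertible, with (1 − K*P)⁻¹ = 1 + K*(1 − P*K)⁻¹*P; consequently the four closed-loop maps Y := (1 − P*K)⁻¹, U := K*(1 − P*K)⁻¹, W := (1 − P*K)⁻¹*P, Z := 1 + K*(1 − P*K)⁻¹*P satisfy the input-output affine constraints Y − P*U = 1, W − P*Z = 0, Y*P − W = 0, Z − U*P = 1, and U*Y⁻¹ = K. -/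
/-- Closed-loop responses lie in the input-output affine subspace: if `1 − P*K` is
invertible then so is `1 − K*P`, with `(1 − K*P)⁻¹ = 1 + K*(1 − P*K)⁻¹*P`, and the
closed-loop maps `Y := (1 − P*K)⁻¹`, `U := K*(1 − P*K)⁻¹`, `W := (1 − P*K)⁻¹*P`,
`Z := 1 + K*(1 − P*K)⁻¹*P` satisfy the affine constraints and `U*Y⁻¹ = K`. -/
theorem closed_loop_in_iop_subspace {M : Type*} [Ring M] (P K : M)
    [Invertible (1 - P * K)]
    (Y U W Z : M)
    (hY : Y = ⅟(1 - P * K)) (hU : U = K * ⅟(1 - P * K))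
    (hW : W = ⅟(1 - P * K) * P) (hZ : Z = 1 + K * ⅟(1 - P * K) * P) :
    IsUnit (1 - K * P) ∧ Ring.inverse (1 - K * P) = 1 + K * ⅟(1 - P * K) * P ∧
      Y - P * U = 1 ∧ W - P * Z = 0 ∧ Y * P - W = 0 ∧ Z - U * P = 1 ∧
      U * Ring.inverse Y = K := by
  set V := ⅟(1 - P * K) with hV
  have hv : (1 - P * K) * V = 1 := mul_invOf_self _
  have hv' : V * (1 - P * K) = 1 := invOf_mul_self _
  have hPKV : P * K * V = V - 1 := by
    have h : V - P * K * V = 1 := by rw [← hv]; noncomm_ring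
    rw [sub_eq_iff_eq_add] at h
    rw [eq_sub_iff_add_eq, add_comm, ← h]
  have hVPK : V * (P * K) = V - 1 := by
    have h : V - V * (P * K) = 1 := by rw [← hv']; noncomm_ring
    rw [sub_eq_iff_eq_add] at h
    rw [eq_sub_iff_add_eq, add_comm, ← h]
  have h1 : (1 - K * P) * (1 + K * V * P) = 1 := by
    calc (1 - K * P) * (1 + K * V * P)
        = 1 - K * P + K * V * P - K * (P * K * V) * P := by noncomm_ring
      _ = 1 := by rw [hPKV]; noncomm_ring
  have h2 : (1 + K * V * P) * (1 - K * P) = 1 := by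
    calc (1 + K * V * P) * (1 - K * P)
        = 1 - K * P + K * V * P - K * (V * (P * K)) * P := by noncomm_ring
      _ = 1 := by rw [hVPK]; noncomm_ring
  letI : Invertible (1 - K * P) := ⟨1 + K * V * P, h2, h1⟩
  refine ⟨⟨⟨1 - K * P, 1 + K * V * P, h1, h2⟩, rfl⟩, ?_, ?_, ?_, ?_, ?_, ?_⟩
  · rw [Ring.inverse_invertible]; rfl
  · rw [hY, hU]
    calc V - P * (K * V) = (1 - P * K) * V := by noncomm_ring
      _ = 1 := hv
  · rw [hW, hZ]
    calc V * P - P * (1 + K * V * P) = (1 - P * K) * V * P - P := by noncomm_ring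
      _ = 0 := by rw [hv]; noncomm_ring
  · rw [hY, hW]; noncomm_ring
  · rw [hZ, hU]; noncomm_ring
  · have hYinv : Ring.inverse Y = 1 - P * K := by
      rw [hY]
      letI : Invertible V := invertibleInvOf
      rw [Ring.inverse_invertible]
      exact invOf_invOf _
    rw [hYinv, hU, mul_assoc, hv', mul_one]
end
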